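/- arXiv:2003.05755 — 2 statements merged into one kernel-verified Lean document; each statement's English description precedes it below -/
import Mathlib

section
/- Define recursively fma(j,i) for 1 ≤ i ≤ j ≤ q by fma(i,i) = Eᵢ·min(nᵢ,mᵢ) and for j > i, fma(j,i) = min over i ≤ k < j of min{ fma(j,k+1)+fma(k,i)+m_j·m_k·n_i, fma(j,k+1)+m_j·∑_{ν=i}^{k}E_ν, fma(k,i)+n_i·∑_{ν=k+1}^{j}E_ν }. Then fma(j,i) ≤ n_i·∑_{ν=i}^{j} E_ν (the cost of homogeneous tangent mode) and fma(j,i) ≤ m_j·∑_{ν=i}^{j} E_ν (the cost of homogeneous adjoint mode). -/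
/-!
Both homogeneous modes are among the brackets the recurrence minimises over: tangent mode is
the split `k = i`, propagating the single factor `i` through the chain `i+1, …, j` at cost
`n i` per edge, and adjoint mode is the split `k = j - 1`, back-propagating factor `j` through
`i, …, j-1` at cost `m j` per edge. The remaining factor costs `E · min n m`, which is below
either bound.
-/

/-- The dynamic programming recurrence (dp2) for Generalized Dense Jacobian
Chain Product Bracketing: `fma n m E j i` is the optimal fma cost for the
subchain with factors `i,…,j`. -/
def fma (n m E : ℕ → ℕ) (j i : ℕ) : ℕ :=
  if h : j ≤ i then E i * min (n i) (m i)
  else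
    ((Finset.Ico i j).attach).inf'
      (Finset.attach_nonempty_iff.mpr (Finset.nonempty_Ico.mpr (lt_of_not_ge h)))
      fun k =>
        min (fma n m E j (k.1 + 1) + fma n m E k.1 i + m j * m k.1 * n i)
          (min (fma n m E j (k.1 + 1) + m j * ∑ ν ∈ Finset.Icc i k.1, E ν)
            (fma n m E k.1 i + n i * ∑ ν ∈ Finset.Icc (k.1 + 1) j, E ν))
termination_by j - i
decreasing_by
  all_goals
    have hk := Finset.mem_Ico.mp k.2
    omega

open Finset

namespace fma

variable {n m E : ℕ → ℕ}

theorem self_le_tangent (i : ℕ) : fma n m E i i ≤ n i * E i := by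
  rw [fma, dif_pos le_rfl, mul_comm]
  exact Nat.mul_le_mul_right _ (min_le_left _ _)

theorem self_le_adjoint (i : ℕ) : fma n m E i i ≤ m i * E i := by
  rw [fma, dif_pos le_rfl, mul_comm]
  exact Nat.mul_le_mul_right _ (min_le_right _ _)

theorem le_of_mem_Ico {i j k : ℕ} (hk : k ∈ Ico i j) :
    fma n m E j i ≤ min (fma n m E j (k + 1) + fma n m E k i + m j * m k * n i)
      (min (fma n m E j (k + 1) + m j * ∑ ν ∈ Icc i k, E ν)
        (fma n m E k i + n i * ∑ ν ∈ Icc (k + 1) j, E ν)) := by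
  have hji : ¬ j ≤ i := by
    have := mem_Ico.mp hk
    omega
  rw [fma, dif_neg hji]
  exact inf'_le _ (mem_attach _ ⟨k, hk⟩)

theorem le_add_tangent {i j k : ℕ} (hk : k ∈ Ico i j) :
    fma n m E j i ≤ fma n m E k i + n i * ∑ ν ∈ Icc (k + 1) j, E ν :=
  (le_of_mem_Ico hk).trans <| (min_le_right _ _).trans (min_le_right _ _)

theorem le_add_adjoint {i j k : ℕ} (hk : k ∈ Ico i j) :
    fma n m E j i ≤ fma n m E j (k + 1) + m j * ∑ ν ∈ Icc i k, E ν :=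
  (le_of_mem_Ico hk).trans <| (min_le_right _ _).trans (min_le_left _ _)

end fma

theorem fma_le_homogeneous_general (n m E : ℕ → ℕ)
    (i j : ℕ) (hij : i ≤ j) :
    fma n m E j i ≤ n i * ∑ ν ∈ Finset.Icc i j, E ν ∧
    fma n m E j i ≤ m j * ∑ ν ∈ Finset.Icc i j, E ν := by
  rcases hij.eq_or_lt with rfl | hlt
  · exact ⟨by simpa using fma.self_le_tangent i, by simpa using fma.self_le_adjoint i⟩
  obtain ⟨k, rfl⟩ : ∃ k, j = k + 1 := ⟨j - 1, by omega⟩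
  constructor
  · calc fma n m E (k + 1) i
        ≤ fma n m E i i + n i * ∑ ν ∈ Icc (i + 1) (k + 1), E ν :=
          fma.le_add_tangent (mem_Ico.mpr ⟨le_rfl, hlt⟩)
      _ ≤ n i * E i + n i * ∑ ν ∈ Icc (i + 1) (k + 1), E ν :=
          Nat.add_le_add_right (fma.self_le_tangent i) _
      _ = n i * ∑ ν ∈ Icc i (k + 1), E ν := by
          rw [← mul_add, Icc_add_one_left_eq_Ioc, add_sum_Ioc_eq_sum_Icc hij]
  · calc fma n m E (k + 1) i
        ≤ fma n m E (k + 1) (k + 1) + m (k + 1) * ∑ ν ∈ Icc i k, E ν :=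
          fma.le_add_adjoint (mem_Ico.mpr ⟨by omega, by omega⟩)
      _ ≤ m (k + 1) * E (k + 1) + m (k + 1) * ∑ ν ∈ Icc i k, E ν :=
          Nat.add_le_add_right (fma.self_le_adjoint (k + 1)) _
      _ = m (k + 1) * ∑ ν ∈ Icc i (k + 1), E ν := by
          rw [sum_Icc_succ_top hij]; ring

theorem fma_le_homogeneous (q : ℕ) (n m E : ℕ → ℕ) (hq : 0 < q)
    (hn : ∀ ν, 1 ≤ ν → ν ≤ q → 0 < n ν)
    (hm : ∀ ν, 1 ≤ ν → ν ≤ q → 0 < m ν)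
    (hE : ∀ ν, 1 ≤ ν → ν ≤ q → 0 < E ν)
    (hdim : ∀ ν, 1 ≤ ν → ν < q → m ν = n (ν + 1))
    (i j : ℕ) (hi : 1 ≤ i) (hij : i ≤ j) (hjq : j ≤ q) :
    fma n m E j i ≤ n i * ∑ ν ∈ Finset.Icc i j, E ν ∧
    fma n m E j i ≤ m j * ∑ ν ∈ Finset.Icc i j, E ν :=
  fma_le_homogeneous_general n m E i j hij
end

section
/- Let n₁, m₁, n₂, m₂, E₁, E₂ be positive naturals with m₁ = n₂. Then min over the eight generalized bracketing costs for a chain of length two equals min{ min(n₁,m₁)·E₁ + n₁·E₂, min(n₂,m₂)·E₂ + m₂·E₁, min(n₁,m₁)·E₁ + min(n₂,m₂)·E₂ + m₂·n₂·n₁ }; i.e., the eight-element search space reduces to three canonical candidates. -/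
theorem eight_strategies_reduce_to_three
    (n₁ m₁ n₂ m₂ E₁ E₂ : ℕ)
    (hn₁ : 0 < n₁) (hm₁ : 0 < m₁) (hn₂ : 0 < n₂) (hm₂ : 0 < m₂)
    (hE₁ : 0 < E₁) (hE₂ : 0 < E₂) (h : m₁ = n₂) :
    min (n₁ * E₁ + n₁ * E₂)
      (min (m₁ * E₁ + n₁ * E₂)
        (min (m₂ * E₂ + m₂ * E₁)
          (min (n₂ * E₂ + m₂ * E₁)
            (min (n₂ * E₂ + m₁ * E₁ + m₂ * n₂ * n₁)
              (min (m₂ * E₂ + m₁ * E₁ + m₂ * n₂ * n₁)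
                (min (m₂ * E₂ + n₁ * E₁ + m₂ * n₂ * n₁)
                  (n₂ * E₂ + n₁ * E₁ + m₂ * n₂ * n₁))))))) =
    min (min n₁ m₁ * E₁ + n₁ * E₂)
      (min (min n₂ m₂ * E₂ + m₂ * E₁)
        (min n₁ m₁ * E₁ + min n₂ m₂ * E₂ + m₂ * n₂ * n₁)) := by
  symm at h
  subst h
  rcases le_total n₁ n₂ with h1 | h1 <;> rcases le_total n₂ m₂ with h2 | h2 <;>
  · have a1 := Nat.mul_le_mul_right E₁ h1
    have a2 := Nat.mul_le_mul_right E₂ h1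
    have b1 := Nat.mul_le_mul_right E₁ h2
    have b2 := Nat.mul_le_mul_right E₂ h2
    simp only [min_eq_left h1, min_eq_right h1, min_eq_left h2, min_eq_right h2]
    generalize n₁ * E₁ = x1 at *
    generalize n₂ * E₁ = x2 at *
    generalize m₂ * E₁ = x3 at *
    generalize n₁ * E₂ = y1 at *
    generalize n₂ * E₂ = y2 at *
    generalize m₂ * E₂ = y3 at *
    generalize m₂ * n₂ * n₁ = P at *
    omega
end
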